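/- For every finite bounded graded poset P, G_P(t) = H_{aug(P)}(t), where aug(P) adjoins a new minimum element below 0̂. -/

import Mathlib

open Polynomial Finset

attribute [local instance] Classical.propDecidable

variable {P : Type*} [PartialOrder P] [Fintype P]

noncomputable local instance : LocallyFiniteOrder P := Fintype.toLocallyFiniteOrder

noncomputable def posetMu (S : Finset P) (x y : P) : ℤ :=
  if x = y then 1
  else -∑ z ∈ (S ∩ Finset.Ico x y).attach, posetMu S x z.1
termination_by (Finset.Icc x y).card
decreasing_by
  · have hz := (Finset.mem_inter.mp z.2).2
    rw [Finset.mem_Ico] at hz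
    refine Finset.card_lt_card ⟨Finset.Icc_subset_Icc_right hz.2.le, fun hsub => ?_⟩
    have := hsub (Finset.mem_Icc.mpr ⟨hz.1.trans hz.2.le, le_refl y⟩)
    exact absurd (Finset.mem_Icc.mp this).2 (fun h => lt_irrefl _ (lt_of_lt_of_le hz.2 h))

noncomputable def posetChi (S : Finset P) (ρ : P → ℕ) (x y : P) : Polynomial ℝ :=
  ∑ z ∈ S ∩ Finset.Icc x y, C (posetMu S x z : ℝ) * X ^ (ρ y - ρ z)

noncomputable def posetChibar (S : Finset P) (ρ : P → ℕ) (x y : P) : Polynomial ℝ :=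
  if x = y then -1 else posetChi S ρ x y /ₘ (X - C 1)

noncomputable def posetChow (S : Finset P) (ρ : P → ℕ) (x y : P) : Polynomial ℝ :=
  if x = y then 1
  else ∑ z ∈ (S ∩ Finset.Ioc x y).attach, posetChibar S ρ x z.1 * posetChow S ρ z.1 y
termination_by (Finset.Icc x y).card
decreasing_by
  · have hz := (Finset.mem_inter.mp z.2).2
    rw [Finset.mem_Ioc] at hz
    refine Finset.card_lt_card ⟨Finset.Icc_subset_Icc_left hz.1.le, fun hsub => ?_⟩
    have := hsub (Finset.mem_Icc.mpr ⟨le_refl x, hz.1.le.trans hz.2⟩)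
    exact absurd (Finset.mem_Icc.mp this).1 (fun h => lt_irrefl _ (lt_of_lt_of_le hz.1 h))

noncomputable def posetG (S : Finset P) (ρ : P → ℕ) (x y : P) : Polynomial ℝ :=
  ∑ z ∈ S ∩ Finset.Icc x y, X ^ (ρ z - ρ x) * posetChow S ρ z y

def IsRankFn [BoundedOrder P] (ρ : P → ℕ) : Prop :=
  ρ ⊥ = 0 ∧ ∀ x y : P, x ⋖ y → ρ y = ρ x + 1

noncomputable local instance {Q : Type*} [Fintype Q] : Fintype (WithBot Q) :=
  inferInstanceAs (Fintype (Option Q))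


section AuxLemmas

lemma univ_inter' (s : Finset P) : (Finset.univ : Finset P) ∩ s = s := by
  ext a; simp

lemma posetMu_self' (S : Finset P) (x : P) : posetMu S x x = 1 := by
  rw [posetMu]; simp

lemma posetMu_ne' (S : Finset P) {x y : P} (h : x ≠ y) :
    posetMu S x y = -∑ z ∈ S ∩ Finset.Ico x y, posetMu S x z := by
  rw [posetMu, if_neg h, Finset.sum_attach _ (fun z => posetMu S x z)]

lemma posetChow_ne' (S : Finset P) (ρ : P → ℕ) {x y : P} (h : x ≠ y) :
    posetChow S ρ x y
      = ∑ z ∈ S ∩ Finset.Ioc x y, posetChibar S ρ x z * posetChow S ρ z y := by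
  rw [posetChow, if_neg h,
    Finset.sum_attach _ (fun z => posetChibar S ρ x z * posetChow S ρ z y)]

lemma card_Icc_lt_left {x w z : P} (h : w ∈ Finset.Ico x z) :
    (Finset.Icc x w).card < (Finset.Icc x z).card := by
  rw [Finset.mem_Ico] at h
  refine Finset.card_lt_card ⟨Finset.Icc_subset_Icc_right h.2.le, fun hsub => ?_⟩
  have := hsub (Finset.mem_Icc.mpr ⟨h.1.trans h.2.le, le_refl z⟩)
  exact absurd (Finset.mem_Icc.mp this).2 h.2.not_ge

lemma card_Icc_lt_right {x w z : P} (h : w ∈ Finset.Ioc x z) :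
    (Finset.Icc w z).card < (Finset.Icc x z).card := by
  rw [Finset.mem_Ioc] at h
  refine Finset.card_lt_card ⟨Finset.Icc_subset_Icc_left h.1.le, fun hsub => ?_⟩
  have := hsub (Finset.mem_Icc.mpr ⟨le_refl x, h.1.le.trans h.2⟩)
  exact absurd (Finset.mem_Icc.mp this).1 h.1.not_ge

/-- The coercion `P ↪ WithBot P` as an embedding. -/
def botCoeEmb (P : Type*) [PartialOrder P] : P ↪ WithBot P :=
  ⟨fun a => (a : WithBot P), WithBot.coe_injective⟩

@[simp] lemma botCoeEmb_apply (a : P) : botCoeEmb P a = (a : WithBot P) := rfl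

lemma map_coe_Ico (x z : P) :
    Finset.Ico (x : WithBot P) (z : WithBot P) = (Finset.Ico x z).map (botCoeEmb P) := by
  ext b
  induction b using WithBot.recBotCoe with
  | bot => simp [Finset.mem_Ico, Finset.mem_map]
  | coe a => simp [Finset.mem_Ico, Finset.mem_map]

lemma map_coe_Icc (x z : P) :
    Finset.Icc (x : WithBot P) (z : WithBot P) = (Finset.Icc x z).map (botCoeEmb P) := by
  ext b
  induction b using WithBot.recBotCoe with
  | bot => simp [Finset.mem_Icc, Finset.mem_map]
  | coe a => simp [Finset.mem_Icc, Finset.mem_map]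

lemma map_coe_Ioc (x z : P) :
    Finset.Ioc (x : WithBot P) (z : WithBot P) = (Finset.Ioc x z).map (botCoeEmb P) := by
  ext b
  induction b using WithBot.recBotCoe with
  | bot => simp [Finset.mem_Ioc, Finset.mem_map]
  | coe a => simp [Finset.mem_Ioc, Finset.mem_map]

lemma bot_not_mem_map (s : Finset P) : (⊥ : WithBot P) ∉ s.map (botCoeEmb P) := by
  simp [Finset.mem_map]

lemma ico_bot_coe {b0 : P} (hb0 : ∀ a : P, b0 ≤ a) (v : P) :
    Finset.Ico (⊥ : WithBot P) (v : WithBot P)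
      = Finset.cons (⊥ : WithBot P) ((Finset.Ico b0 v).map (botCoeEmb P))
          (bot_not_mem_map _) := by
  ext b
  induction b using WithBot.recBotCoe with
  | bot => simp [Finset.mem_Ico, Finset.mem_map, WithBot.bot_lt_coe]
  | coe a => simp [Finset.mem_Ico, Finset.mem_map, WithBot.coe_lt_coe, hb0 a]

lemma icc_bot_coe {b0 : P} (hb0 : ∀ a : P, b0 ≤ a) (u : P) :
    Finset.Icc (⊥ : WithBot P) (u : WithBot P)
      = Finset.cons (⊥ : WithBot P) ((Finset.Icc b0 u).map (botCoeEmb P))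
          (bot_not_mem_map _) := by
  ext b
  induction b using WithBot.recBotCoe with
  | bot => simp [Finset.mem_Icc, Finset.mem_map]
  | coe a => simp [Finset.mem_Icc, Finset.mem_map, WithBot.coe_le_coe, hb0 a]

lemma ioc_bot_top {t0 : P} (ht0 : ∀ a : P, a ≤ t0) :
    Finset.Ioc (⊥ : WithBot P) (t0 : WithBot P) = Finset.univ.map (botCoeEmb P) := by
  ext b
  induction b using WithBot.recBotCoe with
  | bot => simp [Finset.mem_Ioc, Finset.mem_map]
  | coe a => simp [Finset.mem_Ioc, Finset.mem_map, WithBot.bot_lt_coe, WithBot.coe_le_coe,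
      ht0 a]

lemma card_Ico_b0_lt {b0 : P} {w v : P} (h : w ∈ Finset.Ico b0 v) :
    (Finset.Ico b0 w).card < (Finset.Ico b0 v).card := by
  refine Finset.card_lt_card ⟨Finset.Ico_subset_Ico_right (Finset.mem_Ico.mp h).2.le,
    fun hsub => ?_⟩
  exact absurd (Finset.mem_Ico.mp (hsub h)).2 (lt_irrefl w)

lemma muWB_bot {b0 : P} (hb0 : ∀ a : P, b0 ≤ a) (v : P) :
    posetMu (Finset.univ : Finset (WithBot P)) ⊥ (v : WithBot P)
      = if v = b0 then -1 else 0 := by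
  have key : ∀ n : ℕ, ∀ v : P, (Finset.Ico b0 v).card = n →
      posetMu (Finset.univ : Finset (WithBot P)) ⊥ (v : WithBot P)
        = if v = b0 then -1 else 0 := by
    intro n
    induction n using Nat.strong_induction_on with
    | _ n ih =>
      intro v hn
      rw [posetMu_ne' _ (WithBot.bot_ne_coe), univ_inter', ico_bot_coe hb0,
        Finset.sum_cons, Finset.sum_map, posetMu_self']
      have h1 : ∀ w ∈ Finset.Ico b0 v,
          posetMu (Finset.univ : Finset (WithBot P)) ⊥ (botCoeEmb P w)
            = if w = b0 then -1 else 0 :=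
        fun w hw => ih _ (hn ▸ card_Ico_b0_lt hw) w rfl
      rw [Finset.sum_congr rfl h1]
      simp only [Finset.sum_ite_eq']
      by_cases hv : v = b0
      · subst hv
        simp [Finset.mem_Ico]
      · have hmem : b0 ∈ Finset.Ico b0 v :=
          Finset.mem_Ico.mpr ⟨le_refl _, (hb0 v).lt_of_ne (fun h => hv h.symm)⟩
        rw [if_pos hmem, if_neg hv]
        ring
  exact key _ v rfl

lemma muWB_coe (x z : P) :
    posetMu (Finset.univ : Finset (WithBot P)) (x : WithBot P) (z : WithBot P)
      = posetMu (Finset.univ : Finset P) x z := by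
  have key : ∀ n : ℕ, ∀ x z : P, (Finset.Icc x z).card = n →
      posetMu (Finset.univ : Finset (WithBot P)) (x : WithBot P) (z : WithBot P)
        = posetMu (Finset.univ : Finset P) x z := by
    intro n
    induction n using Nat.strong_induction_on with
    | _ n ih =>
      intro x z hn
      by_cases hxz : x = z
      · subst hxz; rw [posetMu_self', posetMu_self']
      · rw [posetMu_ne' _ (fun h => hxz (WithBot.coe_inj.mp h)), posetMu_ne' _ hxz,
          univ_inter', univ_inter', map_coe_Ico, Finset.sum_map]
        congr 1
        exact Finset.sum_congr rfl fun w hw => ih _ (hn ▸ card_Icc_lt_left hw) x w rfl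
  exact key _ x z rfl

lemma chiWB_coe (ρ : P → ℕ) (x y : P) :
    posetChi (Finset.univ : Finset (WithBot P))
        (fun z => WithBot.recBotCoe 0 (fun x => ρ x + 1) z) (x : WithBot P) (y : WithBot P)
      = posetChi (Finset.univ : Finset P) ρ x y := by
  rw [posetChi, posetChi, univ_inter', univ_inter', map_coe_Icc, Finset.sum_map]
  refine Finset.sum_congr rfl fun w hw => ?_
  rw [botCoeEmb_apply, muWB_coe]
  simp [Nat.add_sub_add_right]

lemma chibarWB_coe (ρ : P → ℕ) (x y : P) :
    posetChibar (Finset.univ : Finset (WithBot P))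
        (fun z => WithBot.recBotCoe 0 (fun x => ρ x + 1) z) (x : WithBot P) (y : WithBot P)
      = posetChibar (Finset.univ : Finset P) ρ x y := by
  by_cases hxy : x = y
  · subst hxy; rw [posetChibar, posetChibar, if_pos rfl, if_pos rfl]
  · rw [posetChibar, posetChibar, if_neg (fun h => hxy (WithBot.coe_inj.mp h)), if_neg hxy,
      chiWB_coe]

lemma chowWB_coe (ρ : P → ℕ) (u v : P) :
    posetChow (Finset.univ : Finset (WithBot P))
        (fun z => WithBot.recBotCoe 0 (fun x => ρ x + 1) z) (u : WithBot P) (v : WithBot P)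
      = posetChow (Finset.univ : Finset P) ρ u v := by
  have key : ∀ n : ℕ, ∀ u v : P, (Finset.Icc u v).card = n →
      posetChow (Finset.univ : Finset (WithBot P))
          (fun z => WithBot.recBotCoe 0 (fun x => ρ x + 1) z) (u : WithBot P) (v : WithBot P)
        = posetChow (Finset.univ : Finset P) ρ u v := by
    intro n
    induction n using Nat.strong_induction_on with
    | _ n ih =>
      intro u v hn
      by_cases huv : u = v
      · subst huv
        rw [posetChow, posetChow]
        simp
      · rw [posetChow_ne' _ _ (fun h => huv (WithBot.coe_inj.mp h)), posetChow_ne' _ _ huv,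
          univ_inter', univ_inter', map_coe_Ioc, Finset.sum_map]
        refine Finset.sum_congr rfl fun w hw => ?_
        rw [botCoeEmb_apply, chibarWB_coe, ih _ (hn ▸ card_Icc_lt_right hw) w v rfl]
  exact key _ u v rfl

lemma chiWB_bot {b0 : P} (hb0 : ∀ a : P, b0 ≤ a) (ρ : P → ℕ) (hρ0 : ρ b0 = 0) (u : P) :
    posetChi (Finset.univ : Finset (WithBot P))
        (fun z => WithBot.recBotCoe 0 (fun x => ρ x + 1) z) ⊥ (u : WithBot P)
      = (X - C 1) * X ^ ρ u := by
  rw [posetChi, univ_inter', icc_bot_coe hb0, Finset.sum_cons, Finset.sum_map, posetMu_self']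
  have h1 : ∀ v ∈ Finset.Icc b0 u,
      C ((posetMu (Finset.univ : Finset (WithBot P)) ⊥ (botCoeEmb P v) : ℤ) : ℝ) *
          X ^ ((WithBot.recBotCoe 0 (fun x => ρ x + 1) ((u : WithBot P)))
            - (WithBot.recBotCoe 0 (fun x => ρ x + 1) (botCoeEmb P v)))
        = if v = b0 then -X ^ ρ u else 0 := by
    intro v hv
    rw [botCoeEmb_apply, muWB_bot hb0]
    by_cases hv0 : v = b0
    · subst hv0
      simp [hρ0, Nat.add_sub_add_right]
    · simp [hv0]
  rw [Finset.sum_congr rfl h1]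
  simp only [Finset.sum_ite_eq']
  have hb : b0 ∈ Finset.Icc b0 u := Finset.mem_Icc.mpr ⟨le_refl _, hb0 u⟩
  rw [if_pos hb]
  simp only [WithBot.recBotCoe_bot, WithBot.recBotCoe_coe, Nat.sub_zero, Int.cast_one, map_one,
    one_mul]
  ring

lemma chibarWB_bot {b0 : P} (hb0 : ∀ a : P, b0 ≤ a) (ρ : P → ℕ) (hρ0 : ρ b0 = 0) (u : P) :
    posetChibar (Finset.univ : Finset (WithBot P))
        (fun z => WithBot.recBotCoe 0 (fun x => ρ x + 1) z) ⊥ (u : WithBot P)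
      = X ^ ρ u := by
  rw [posetChibar, if_neg (WithBot.bot_ne_coe), chiWB_bot hb0 ρ hρ0 u,
    Polynomial.mul_divByMonic_cancel_left _ (monic_X_sub_C 1)]

end AuxLemmas

/-- `G_P = H_{aug(P)}`: the augmented Chow polynomial of a finite bounded
graded poset `P` equals the Chow polynomial of the augmentation of `P`,
obtained by adjoining a new minimum element below `0̂` (rank `0`, with all
old elements shifted up by one in rank). -/
theorem augChow_eq_chow_augmentation
    {P : Type*} [PartialOrder P] [Fintype P] [BoundedOrder P]
    (ρ : P → ℕ) (hρ : IsRankFn ρ) :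
    posetG (Finset.univ : Finset P) ρ ⊥ ⊤ =
      posetChow (Finset.univ : Finset (WithBot P))
        (fun z => WithBot.recBotCoe 0 (fun x => ρ x + 1) z)
        (⊥ : WithBot P) ((⊤ : P) : WithBot P) := by
  have hI : Finset.Icc (⊥ : P) (⊤ : P) = Finset.univ := by
    ext a; simp [Finset.mem_Icc]
  have hne : (⊥ : WithBot P) ≠ ((⊤ : P) : WithBot P) := WithBot.bot_ne_coe
  rw [posetG, univ_inter', hI, posetChow_ne' _ _ hne, univ_inter',
    ioc_bot_top (fun a : P => le_top), Finset.sum_map]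
  refine Finset.sum_congr rfl fun z _ => ?_
  rw [botCoeEmb_apply, chibarWB_bot (fun a : P => bot_le) ρ hρ.1 z, chowWB_coe, hρ.1,
    Nat.sub_zero]
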